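/- Let φ_0, φ_1, … be i.i.d. random functions from Ω to Ω such that P(φ(x) ∈ A) = K(x, A) for all x and measurable A. Define Φ_0 = id and Φ_t = φ_{t−1} ∘ Φ_{t−1}. Then for any x_0, the total variation distance between K^t(x_0, ·) and the stationary distribution π is at most P(Φ_t is not a constant function). -/
import Mathlib


open MeasureTheory

/-- Complete coupling bound: if `Φ t ω` is the `t`-fold composition of i.i.d. random maps
updating the chain, so that `Φ t · x ~ K^t(x,·)` for every `x`, and `π` is stationary,
then `‖K^t(x₀,·) − π‖_TV ≤ P(Φ_t is not a constant function)`. -/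
theorem stmt1 {Ωp S : Type*} [MeasurableSpace Ωp] [MeasurableSpace S]
    (P : Measure Ωp) [IsProbabilityMeasure P]
    (Φ : ℕ → Ωp → S → S)                 -- `Φ t ω : S → S`
    (Kt : ℕ → S → Measure S)             -- `Kt t x = K^t(x,·)`
    (π : Measure S) [IsProbabilityMeasure π]
    (hΦm : ∀ t x, Measurable (fun ω => Φ t ω x))
    (hK : ∀ (t : ℕ) (x : S), P.map (fun ω => Φ t ω x) = Kt t x)
    (hstat : ∀ (t : ℕ) (A : Set S), MeasurableSet A →
      ∫⁻ x, Kt t x A ∂π = π A) :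
    ∀ (x₀ : S) (t : ℕ) (A : Set S), MeasurableSet A →
      |(Kt t x₀ A).toReal - (π A).toReal|
        ≤ (P {ω | ¬ ∃ c : S, ∀ x : S, Φ t ω x = c}).toReal := by
  intro x₀ t A hA
  set C : Set Ωp := {ω | ¬ ∃ c : S, ∀ x : S, Φ t ω x = c} with hC
  have hmap : ∀ x : S, Kt t x A = P {ω | Φ t ω x ∈ A} := by
    intro x
    rw [← hK t x, Measure.map_apply (hΦm t x) hA]
    rfl
  have key : ∀ x y : S, Kt t x A ≤ Kt t y A + P C := by
    intro x y
    rw [hmap x, hmap y]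
    refine le_trans (measure_mono ?_) (measure_union_le _ _)
    intro ω hω
    by_cases hc : ∃ c : S, ∀ z : S, Φ t ω z = c
    · left
      obtain ⟨c, hcc⟩ := hc
      simp only [Set.mem_setOf_eq] at hω ⊢
      rw [hcc y, ← hcc x]; exact hω
    · right; exact hc
  have hfin1 : Kt t x₀ A ≠ ⊤ := by
    rw [hmap]; exact (measure_lt_top P _).ne
  have hfinπ : π A ≠ ⊤ := (measure_lt_top π _).ne
  have hfinC : P C ≠ ⊤ := (measure_lt_top P _).ne
  have h1 : Kt t x₀ A ≤ π A + P C := by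
    rw [← hstat t A hA]
    calc Kt t x₀ A = ∫⁻ _, Kt t x₀ A ∂π := by simp
    _ ≤ ∫⁻ x, (Kt t x A + P C) ∂π := lintegral_mono fun x => key x₀ x
    _ = (∫⁻ x, Kt t x A ∂π) + P C := by
        rw [lintegral_add_right _ measurable_const]; simp
  have h2 : π A ≤ Kt t x₀ A + P C := by
    rw [← hstat t A hA]
    calc ∫⁻ x, Kt t x A ∂π ≤ ∫⁻ _, (Kt t x₀ A + P C) ∂π :=
          lintegral_mono fun x => key x x₀
    _ = Kt t x₀ A + P C := by simp
  rw [abs_sub_le_iff]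
  constructor
  · have := ENNReal.toReal_mono (ENNReal.add_ne_top.mpr ⟨hfinπ, hfinC⟩) h1
    rw [ENNReal.toReal_add hfinπ hfinC] at this
    linarith
  · have := ENNReal.toReal_mono (ENNReal.add_ne_top.mpr ⟨hfin1, hfinC⟩) h2
    rw [ENNReal.toReal_add hfin1 hfinC] at this
    linarith
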